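/- For positive definite Hermitian matrices A and B, with U := B^{-1/2} A^{-1/2} (A^{1/2} B A^{1/2})^{1/2}, one has tr(A) + tr(B) - 2·tr((A^{1/2} B A^{1/2})^{1/2}) = ‖A^{1/2} - B^{1/2} U‖², where ‖M‖² = tr(M* M) is the squared Frobenius norm. -/

import Mathlib

/-!
Write `a = A^{1/2}` and `S = (a B a)^{1/2}`. The factor `B^{1/2} U` collapses to `a⁻¹ S`, and
since `a` and `S` are Hermitian, expanding `‖a - a⁻¹ S‖²` gives
`tr(a²) - tr(a a⁻¹ S) - tr(S a⁻¹ a) + tr(S a⁻¹ a⁻¹ S) = tr A - 2 tr S + tr(a⁻¹ S² a⁻¹)`;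
the last term is `tr B` because `S² = a B a`.
-/

open Matrix
open scoped ComplexOrder

namespace Matrix.PosSemidef

/-- The positive semidefinite square root, as defined in Mathlib of December 2024
(removed from Mathlib since). -/
noncomputable def sqrt {n : Type*} [Fintype n] [DecidableEq n] {𝕜 : Type*} [RCLike 𝕜]
    {A : Matrix n n 𝕜} (hA : PosSemidef A) : Matrix n n 𝕜 :=
  hA.1.eigenvectorUnitary.1 * diagonal ((↑) ∘ (√·) ∘ hA.1.eigenvalues) *
  (star hA.1.eigenvectorUnitary : Matrix n n 𝕜)

end Matrix.PosSemidef

namespace Matrix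

variable {n : Type*} [Fintype n] [DecidableEq n]

theorem trace_conjTranspose_mul_self_sub_inv_mul {R : Type*} [CommRing R] [StarRing R]
    {a S : Matrix n n R} (ha : a.IsHermitian) (hS : S.IsHermitian) (ha_det : IsUnit a.det) :
    ((a - a⁻¹ * S)ᴴ * (a - a⁻¹ * S)).trace =
      (a * a).trace + (a⁻¹ * (S * S) * a⁻¹).trace - 2 * S.trace := by
  have hexp : (a - a⁻¹ * S)ᴴ * (a - a⁻¹ * S) =
      a * a - a * (a⁻¹ * S) - S * a⁻¹ * a + S * a⁻¹ * (a⁻¹ * S) := by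
    rw [conjTranspose_sub, conjTranspose_mul, conjTranspose_nonsing_inv, ha.eq, hS.eq]
    noncomm_ring
  have hcross : (S * a⁻¹ * (a⁻¹ * S)).trace = (a⁻¹ * (S * S) * a⁻¹).trace := by
    rw [trace_mul_comm, ← mul_assoc, mul_assoc a⁻¹]
  rw [hexp, trace_add, trace_sub, trace_sub, mul_nonsing_inv_cancel_left _ _ ha_det,
    nonsing_inv_mul_cancel_right _ _ ha_det, hcross]
  ring

namespace PosSemidef

variable {𝕜 : Type*} [RCLike 𝕜] {A : Matrix n n 𝕜}

theorem posSemidef_sqrt (hA : A.PosSemidef) : hA.sqrt.PosSemidef := by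
  have hD : (diagonal ((↑) ∘ (√·) ∘ hA.1.eigenvalues) : Matrix n n 𝕜).PosSemidef := by
    rw [posSemidef_diagonal_iff]
    intro i
    simpa only [Function.comp_apply, RCLike.ofReal_nonneg] using Real.sqrt_nonneg _
  unfold sqrt
  simpa only [star_eq_conjTranspose] using
    hD.mul_mul_conjTranspose_same (hA.1.eigenvectorUnitary : Matrix n n 𝕜)

theorem sqrt_mul_self (hA : A.PosSemidef) : hA.sqrt * hA.sqrt = A := by
  have hU : (star hA.1.eigenvectorUnitary : Matrix n n 𝕜) * hA.1.eigenvectorUnitary = 1 :=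
    Unitary.coe_star_mul_self _
  have hD : diagonal ((↑) ∘ (√·) ∘ hA.1.eigenvalues) *
      diagonal ((↑) ∘ (√·) ∘ hA.1.eigenvalues) =
      (diagonal (RCLike.ofReal ∘ hA.1.eigenvalues) : Matrix n n 𝕜) := by
    rw [diagonal_mul_diagonal]
    congr 1
    funext i
    simp only [Function.comp_apply, ← RCLike.ofReal_mul,
      Real.mul_self_sqrt (hA.eigenvalues_nonneg i)]
  conv_rhs => rw [hA.1.spectral_theorem, Unitary.conjStarAlgAut_apply, ← hD]
  simp only [sqrt, mul_assoc]
  rw [← mul_assoc (star hA.1.eigenvectorUnitary : Matrix n n 𝕜) _, hU, one_mul]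

end PosSemidef

theorem PosDef.isUnit_det_sqrt {𝕜 : Type*} [RCLike 𝕜] {A : Matrix n n 𝕜} (hA : A.PosDef) :
    IsUnit hA.posSemidef.sqrt.det := by
  rw [← isUnit_iff_isUnit_det, ← isUnit_mul_self_iff, hA.posSemidef.sqrt_mul_self]
  exact hA.isUnit

end Matrix

theorem hellinger_as_factor_distance (n : ℕ)
    (A B : Matrix (Fin n) (Fin n) ℂ) (hA : A.PosDef) (hB : B.PosDef)
    (hS : (hA.posSemidef.sqrt * B * hA.posSemidef.sqrt).PosSemidef) :
    A.trace.re + B.trace.re - 2 * hS.sqrt.trace.re =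
      (((hA.posSemidef.sqrt -
          hB.posSemidef.sqrt * (hB.posSemidef.sqrt⁻¹ * hA.posSemidef.sqrt⁻¹ * hS.sqrt))ᴴ *
        (hA.posSemidef.sqrt -
          hB.posSemidef.sqrt * (hB.posSemidef.sqrt⁻¹ * hA.posSemidef.sqrt⁻¹ * hS.sqrt))).trace).re := by
  have hSS := hS.sqrt_mul_self
  have hS_herm := hS.posSemidef_sqrt.1
  set S := hS.sqrt
  set a := hA.posSemidef.sqrt
  have ha_det : IsUnit a.det := hA.isUnit_det_sqrt
  have hB_factor : a⁻¹ * (S * S) * a⁻¹ = B := by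
    rw [hSS, ← mul_assoc, ← mul_assoc, nonsing_inv_mul _ ha_det, one_mul,
      mul_assoc, mul_nonsing_inv _ ha_det, mul_one]
  rw [mul_assoc, mul_nonsing_inv_cancel_left _ _ hB.isUnit_det_sqrt,
    trace_conjTranspose_mul_self_sub_inv_mul hA.posSemidef.posSemidef_sqrt.1
      hS_herm ha_det, hB_factor, hA.posSemidef.sqrt_mul_self]
  simp [Complex.mul_re]
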